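/- arXiv:1606.00328 — 10 statements merged into one kernel-verified Lean document; each statement's English description precedes it below -/
import Mathlib

section
/- Let F be a commutative perfect semi-field of characteristic 1. Then for all X, Y ∈ F one has X + Y = (X ⊕ Y) − ((−X) ⊕ (−Y)). -/
open scoped Pointwise

/-- A commutative perfect semi-field of characteristic `1`: an abelian group `(F, +, 0)`
together with a commutative, associative, idempotent operation `⊕` over which `+`
distributes, and such that `X ↦ n • X` is surjective for every `n > 0`. -/
class CharOneSemifield (F : Type*) extends AddCommGroup F where
  oplus : F → F → F
  oplus_comm : ∀ X Y : F, oplus X Y = oplus Y X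
  oplus_assoc : ∀ X Y Z : F, oplus (oplus X Y) Z = oplus X (oplus Y Z)
  oplus_idem : ∀ X : F, oplus X X = X
  add_oplus : ∀ X Y Z : F, X + oplus Y Z = oplus (X + Y) (X + Z)
  perfect : ∀ n : ℕ, 0 < n → Function.Surjective (fun X : F => n • X)

namespace CharOneSemifield

variable {F : Type*} [CharOneSemifield F]

/-- The canonical partial order on `F`: `X ≤ Y` iff `X ⊕ Y = Y`. -/
def cle (X Y : F) : Prop := oplus X Y = Y

/-- Assumption 1: every element is dominated by (rational multiples of) `E`:
for every `X` there are naturals `a, b` with `b > 0` and `-(a • E) ≤ b • X ≤ a • E`. -/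
def Assumption1 (E : F) : Prop :=
  ∀ X : F, ∃ a b : ℕ, 0 < b ∧ cle (-(a • E)) (b • X) ∧ cle (b • X) (a • E)

/-- `rval E X` is the infimum in `ℝ` of the ratios `a / b` over the pairs of naturals
`(a, b)` with `b > 0` and `-(a • E) ≤ b • X ≤ a • E`. -/
noncomputable def rval (E X : F) : ℝ :=
  sInf {t : ℝ | ∃ a b : ℕ, 0 < b ∧ t = (a : ℝ) / (b : ℝ) ∧
    cle (-(a • E)) (b • X) ∧ cle (b • X) (a • E)}

/-- Assumption 2: `r(X) = 0` implies `X = 0`. -/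
def Assumption2 (E : F) : Prop := ∀ X : F, rval E X = 0 → X = 0

/-- `F` is Banach if it is (sequentially) complete for the metric `(X, Y) ↦ r (X - Y)`. -/
def IsBanach (E : F) : Prop :=
  ∀ u : ℕ → F,
    (∀ ε : ℝ, 0 < ε → ∃ N : ℕ, ∀ m ≥ N, ∀ n ≥ N, rval E (u m - u n) < ε) →
    ∃ L : F, ∀ ε : ℝ, 0 < ε → ∃ N : ℕ, ∀ n ≥ N, rval E (u n - L) < ε

/-- A character of `F`: a map `φ : F → ℝ`, not identically zero, turning `⊕` into `max`
and `+` into `+`. -/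
def IsChar (φ : F → ℝ) : Prop :=
  (∃ X : F, φ X ≠ 0) ∧
  (∀ X Y : F, φ (oplus X Y) = max (φ X) (φ Y)) ∧
  (∀ X Y : F, φ (X + Y) = φ X + φ Y)

/-- The spectrum `S_E(F)`: the set of characters normalized by `φ E = 1`, viewed as a
subset of the product space `F → ℝ` (topology of pointwise convergence). -/
def specE (E : F) : Set (F → ℝ) := {φ : F → ℝ | IsChar φ ∧ φ E = 1}

/-- A congruence on `F`: an equivalence relation compatible with `-`, `+` and `⊕`. -/
structure IsCongruence (r : F → F → Prop) : Prop where
  equiv : Equivalence r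
  neg_compat : ∀ {X Y : F}, r X Y → r (-X) (-Y)
  add_compat : ∀ {X Y : F} (Z : F), r X Y → r (X + Z) (Y + Z)
  oplus_compat : ∀ {X Y : F} (Z : F), r X Y → r (oplus X Z) (oplus Y Z)

/-- A maximal congruence: a non-trivial congruence such that every coarser congruence is
either equal to it or trivial. -/
def IsMaximalCongruence (rel : F → F → Prop) : Prop :=
  IsCongruence rel ∧ (¬ ∀ X Y : F, rel X Y) ∧
  ∀ s : F → F → Prop, IsCongruence s → (∀ X Y : F, rel X Y → s X Y) →
    (∀ X Y : F, s X Y ↔ rel X Y) ∨ (∀ X Y : F, s X Y)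

end CharOneSemifield

open CharOneSemifield

namespace CharOneSemifield

variable {F : Type*} [CharOneSemifield F]

theorem oplus_neg_neg (X Y : F) : oplus (-X) (-Y) = -(X + Y) + oplus X Y := by
  rw [add_oplus, show -(X + Y) + X = -Y by abel, show -(X + Y) + Y = -X by abel, oplus_comm]

end CharOneSemifield

/-- `X + Y = (X ⊕ Y) - ((-X) ⊕ (-Y))`. -/
theorem stmt1 {F : Type*} [CharOneSemifield F] (X Y : F) :
    X + Y = oplus X Y - oplus (-X) (-Y) := by
  rw [oplus_neg_neg]
  abel
end

section
/- Let F be a commutative perfect semi-field of characteristic 1 and let E ∈ F satisfy Assumption 1. Then necessarily 0 ≤ E, i.e. 0 ⊕ E = E. -/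
open scoped Pointwise

open CharOneSemifield

/-! Translating `b • (-E) ≤ a • E` by `b • E` gives `0 ≤ n • E` with `n = b + a > 0`, and in a
lattice-ordered group this forces `0 ≤ E`: for `T = 0 ⊔ E ⊔ ⋯ ⊔ (n - 1) • E`, the translate
`E + T = E ⊔ ⋯ ⊔ n • E` dominates every term of `T` (the term `0` because `0 ≤ n • E`), so
`T ≤ E + T`. -/

theorem nonneg_of_nsmul_nonneg {α : Type*} [AddCommGroup α] [SemilatticeSup α] [AddLeftMono α]
    {x : α} {n : ℕ} (hn : n ≠ 0) (h : 0 ≤ n • x) : 0 ≤ x := by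
  obtain ⟨m, rfl⟩ := Nat.exists_eq_add_one.2 (Nat.pos_of_ne_zero hn)
  set T := (Finset.range (m + 1)).sup' Finset.nonempty_range_add_one (· • x)
  have le_T {k : ℕ} (hk : k ≤ m) : k • x ≤ T :=
    Finset.le_sup' (· • x) (Finset.mem_range_succ_iff.2 hk)
  suffices T ≤ x + T from (le_add_iff_nonneg_left T).1 this
  refine Finset.sup'_le _ _ fun k hk => ?_
  obtain _ | j := k
  · calc 0 • x = 0 := zero_nsmul x
      _ ≤ (m + 1) • x := h
      _ = x + m • x := succ_nsmul' x m
      _ ≤ x + T := add_le_add_right (le_T le_rfl) x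
  · calc (j + 1) • x = x + j • x := succ_nsmul' x j
      _ ≤ x + T := add_le_add_right (le_T (by rw [Finset.mem_range] at hk; omega)) x

namespace CharOneSemifield

variable {F : Type*} [CharOneSemifield F]

instance : Max F := ⟨oplus⟩

instance : SemilatticeSup F := SemilatticeSup.mk' oplus_comm oplus_assoc oplus_idem

theorem cle_iff_le {X Y : F} : cle X Y ↔ X ≤ Y := Iff.rfl

instance : AddLeftMono F where
  elim Z X Y (h : oplus X Y = Y) := show oplus (Z + X) (Z + Y) = Z + Y by rw [← add_oplus, h]

end CharOneSemifield

/-- an element `E` satisfying Assumption 1 is necessarily `≥ 0`,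
i.e. `0 ⊕ E = E`. -/
theorem stmt2 {F : Type*} [CharOneSemifield F] (E : F) (h1 : Assumption1 E) :
    cle (0 : F) E := by
  obtain ⟨a, b, hb, -, hbE⟩ := h1 (-E)
  rw [cle_iff_le] at hbE ⊢
  refine nonneg_of_nsmul_nonneg (n := b + a) (by omega) ?_
  calc (0 : F) = b • E + b • -E := by rw [smul_neg, add_neg_cancel]
    _ ≤ b • E + a • E := add_le_add_right hbE _
    _ = (b + a) • E := (add_nsmul E b a).symm
end

section
/- Let F be a commutative perfect semi-field of characteristic 1 satisfying Assumption 1. Then for all X, Y ∈ F: r(−X) = r(X), r(X + Y) ≤ r(X) + r(Y), and r(n•X) = n·r(X) for every natural number n. -/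
open scoped Pointwise

open CharOneSemifield

/-!
Negation reverses the order of `F`, so the admissible pairs `(a, b)` for `-X` are those for `X`.
Multiplying the defining inequalities by `n`, and adding two of them after bringing them to a
common denominator, shows that the ratio set of `n • X` is `n` times that of `X` and that the
ratio set of `X + Y` contains the sum of those of `X` and `Y`. Taking infima gives the claims.
-/

namespace CharOneSemifield

variable {F : Type*} [CharOneSemifield F] {E : F}

section Order

lemma cle_refl (X : F) : cle X X := oplus_idem X

lemma cle_trans {X Y Z : F} (hXY : cle X Y) (hYZ : cle Y Z) : cle X Z := by
  unfold cle at *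
  rw [← hYZ, ← oplus_assoc, hXY]

lemma cle_add_left {X Y : F} (Z : F) (h : cle X Y) : cle (Z + X) (Z + Y) := by
  unfold cle at *
  rw [← add_oplus, h]

lemma cle_add_right {X Y : F} (Z : F) (h : cle X Y) : cle (X + Z) (Y + Z) := by
  simpa only [add_comm _ Z] using cle_add_left Z h

lemma cle_neg {X Y : F} (h : cle X Y) : cle (-Y) (-X) := by
  have hXY := cle_add_left (-(X + Y)) h
  rwa [show -(X + Y) + X = -Y by abel, show -(X + Y) + Y = -X by abel] at hXY

lemma cle_neg_iff {X Y : F} : cle (-Y) (-X) ↔ cle X Y :=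
  ⟨fun h => by simpa only [neg_neg] using cle_neg h, cle_neg⟩

lemma cle_add_add {X Y A B : F} (hXA : cle X A) (hYB : cle Y B) : cle (X + Y) (A + B) :=
  cle_trans (cle_add_right Y hXA) (cle_add_left A hYB)

lemma cle_nsmul {X Y : F} (n : ℕ) (h : cle X Y) : cle (n • X) (n • Y) := by
  induction n with
  | zero => simpa only [zero_smul] using cle_refl (0 : F)
  | succ k ih => simpa only [succ_nsmul] using cle_add_add ih h

end Order

section Bounds

def Bounds (E : F) (a b : ℕ) (X : F) : Prop :=
  cle (-(a • E)) (b • X) ∧ cle (b • X) (a • E)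

variable {X Y : F} {a b c : ℕ}

lemma bounds_neg_iff : Bounds E a b (-X) ↔ Bounds E a b X := by
  unfold Bounds
  rw [smul_neg, cle_neg_iff, And.comm, ← cle_neg_iff (X := -(a • E)), neg_neg]

lemma bounds_mul_iff (n : ℕ) : Bounds E a (b * n) X ↔ Bounds E a b (n • X) := by
  rw [Bounds, Bounds, mul_smul]

lemma Bounds.nsmul (n : ℕ) (h : Bounds E a b X) : Bounds E (n * a) b (n • X) := by
  have hl := cle_nsmul n h.1
  have hr := cle_nsmul n h.2
  rw [smul_neg, smul_comm n b X, smul_smul n a E] at hl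
  rw [smul_comm n b X, smul_smul n a E] at hr
  exact ⟨hl, hr⟩

lemma Bounds.mul (n : ℕ) (h : Bounds E a b X) : Bounds E (n * a) (b * n) X :=
  (bounds_mul_iff n).mpr (h.nsmul n)

lemma Bounds.add (hX : Bounds E a b X) (hY : Bounds E c b Y) : Bounds E (a + c) b (X + Y) := by
  have hl := cle_add_add hX.1 hY.1
  have hr := cle_add_add hX.2 hY.2
  rw [← neg_add, ← add_smul, ← smul_add] at hl
  rw [← add_smul, ← smul_add] at hr
  exact ⟨hl, hr⟩

end Bounds

section Ratios

def ratioSet (E X : F) : Set ℝ :=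
  {t : ℝ | ∃ a b : ℕ, 0 < b ∧ t = (a : ℝ) / (b : ℝ) ∧ Bounds E a b X}

lemma rval_eq_sInf_ratioSet (X : F) : rval E X = sInf (ratioSet E X) := rfl

lemma ratioSet_nonempty (h1 : Assumption1 E) (X : F) : (ratioSet E X).Nonempty := by
  obtain ⟨a, b, hb, hX⟩ := h1 X
  exact ⟨(a : ℝ) / b, a, b, hb, rfl, hX⟩

lemma zero_mem_lowerBounds_ratioSet (X : F) : 0 ∈ lowerBounds (ratioSet E X) := by
  rintro _ ⟨a, b, -, rfl, -⟩
  positivity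

lemma ratioSet_neg (X : F) : ratioSet E (-X) = ratioSet E X := by
  simp only [ratioSet, bounds_neg_iff]

lemma ratioSet_nsmul (X : F) {n : ℕ} (hn : 0 < n) :
    ratioSet E (n • X) = (n : ℝ) • ratioSet E X := by
  have hn' : (n : ℝ) ≠ 0 := by positivity
  ext t
  constructor
  · rintro ⟨a, b, hb, rfl, hX⟩
    refine ⟨a / (b * n : ℕ), ⟨a, b * n, Nat.mul_pos hb hn, rfl, (bounds_mul_iff n).mpr hX⟩, ?_⟩
    push_cast
    rw [smul_eq_mul]
    field_simp
  · rintro ⟨_, ⟨a, b, hb, rfl, hX⟩, rfl⟩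
    refine ⟨n * a, b, hb, ?_, hX.nsmul n⟩
    push_cast
    rw [smul_eq_mul, mul_div_assoc]

lemma ratioSet_add_subset (X Y : F) : ratioSet E X + ratioSet E Y ⊆ ratioSet E (X + Y) := by
  rintro _ ⟨_, ⟨a, b, hb, rfl, hX⟩, _, ⟨c, d, hd, rfl, hY⟩, rfl⟩
  have hY' := hY.mul b
  rw [mul_comm d b] at hY'
  refine ⟨d * a + b * c, b * d, Nat.mul_pos hb hd, ?_, (hX.mul d).add hY'⟩
  push_cast
  field_simp

lemma zero_mem_ratioSet_zero : (0 : ℝ) ∈ ratioSet E (0 : F) :=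
  ⟨0, 1, one_pos, by simp, by simp [Bounds, cle_refl]⟩

end Ratios

lemma rval_zero : rval E (0 : F) = 0 :=
  IsLeast.csInf_eq ⟨zero_mem_ratioSet_zero, zero_mem_lowerBounds_ratioSet 0⟩

lemma rval_neg (X : F) : rval E (-X) = rval E X := by
  rw [rval_eq_sInf_ratioSet, ratioSet_neg, rval_eq_sInf_ratioSet]

lemma rval_nsmul (X : F) (n : ℕ) : rval E (n • X) = n * rval E X := by
  rcases Nat.eq_zero_or_pos n with rfl | hn
  · rw [zero_smul, rval_zero, Nat.cast_zero, zero_mul]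
  · rw [rval_eq_sInf_ratioSet, rval_eq_sInf_ratioSet, ratioSet_nsmul X hn, Real.sInf_smul_of_nonneg n.cast_nonneg,
      smul_eq_mul]

lemma rval_add_le (h1 : Assumption1 E) (X Y : F) : rval E (X + Y) ≤ rval E X + rval E Y := by
  have bdd (Z : F) : BddBelow (ratioSet E Z) := ⟨0, zero_mem_lowerBounds_ratioSet Z⟩
  simp only [rval_eq_sInf_ratioSet]
  rw [← csInf_add (ratioSet_nonempty h1 X) (bdd X) (ratioSet_nonempty h1 Y) (bdd Y)]
  exact csInf_le_csInf (bdd _) ((ratioSet_nonempty h1 X).add (ratioSet_nonempty h1 Y))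
    (ratioSet_add_subset X Y)

end CharOneSemifield

/-- `r(-X) = r(X)`, `r(X + Y) ≤ r(X) + r(Y)` and `r(n • X) = n * r(X)`. -/
theorem stmt3 {F : Type*} [CharOneSemifield F] (E : F) (h1 : Assumption1 E) (X Y : F) :
    rval E (-X) = rval E X ∧
    rval E (X + Y) ≤ rval E X + rval E Y ∧
    ∀ n : ℕ, rval E (n • X) = (n : ℝ) * rval E X :=
  ⟨rval_neg X, rval_add_le h1 X Y, rval_nsmul X⟩
end

section
/- Let F be a commutative perfect semi-field of characteristic 1 satisfying Assumption 1. Then for all X, X', Y, Y' ∈ F one has the ultrametric-type inequality r((X ⊕ Y) − (X' ⊕ Y')) ≤ max(r(X − X'), r(Y − Y')). In particular, r(X ⊕ Y) ≤ max(r(X), r(Y)). -/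
open scoped Pointwise

open CharOneSemifield

/-!
`⊕` makes `F` a join-semilattice in which translations are monotone, so `F` behaves like
a lattice-ordered group; in particular `0 ≤ n • x` forces `0 ≤ x`. A pair `(a, b)` bounding
`X - X'` then says `-c ≤ X - X' ≤ c` for the element `c` with `b • c = a • E` supplied by
perfectness, and such two-sided bounds pass to `(X ⊕ Y) - (X' ⊕ Y')`. Bringing the bounds
for `X - X'` and `Y - Y'` to a common denominator and taking infima gives the inequality.
-/

theorem sup_sub_sup_le {α : Type*} [AddCommGroup α] [SemilatticeSup α] [IsOrderedAddMonoid α]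
    {P P' Q Q' c : α} (hP : P - P' ≤ c) (hQ : Q - Q' ≤ c) : P ⊔ Q - (P' ⊔ Q') ≤ c := by
  rw [sub_le_iff_le_add] at *
  exact sup_le (hP.trans (add_le_add_right le_sup_left c))
    (hQ.trans (add_le_add_right le_sup_right c))

theorem csInf_le_max_csInf {α : Type*} [ConditionallyCompleteLinearOrder α] {S T U : Set α}
    (hS : S.Nonempty) (hT : T.Nonempty) (hU : BddBelow U) (h : ∀ s ∈ S, ∀ t ∈ T, max s t ∈ U) :
    sInf U ≤ max (sInf S) (sInf T) := by
  by_contra! hlt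
  obtain ⟨s, hs, hsU⟩ := exists_lt_of_csInf_lt hS ((le_max_left _ _).trans_lt hlt)
  obtain ⟨t, ht, htU⟩ := exists_lt_of_csInf_lt hT ((le_max_right _ _).trans_lt hlt)
  exact (csInf_le hU (h s hs t ht)).not_gt (max_lt hsU htU)

theorem natCast_max_mul_div_mul {a₁ b₁ a₂ b₂ : ℕ} (hb₁ : 0 < b₁) (hb₂ : 0 < b₂) :
    ((max (a₁ * b₂) (a₂ * b₁) : ℕ) : ℝ) / (b₁ * b₂ : ℕ) = max ((a₁ : ℝ) / b₁) ((a₂ : ℝ) / b₂) := by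
  have : (0 : ℝ) < b₁ := by exact_mod_cast hb₁
  have : (0 : ℝ) < b₂ := by exact_mod_cast hb₂
  push_cast
  rw [← max_div_div_right (by positivity), mul_div_mul_right _ _ (by positivity),
    mul_comm (b₁ : ℝ), mul_div_mul_right _ _ (by positivity)]

namespace CharOneSemifield

variable {F : Type*} [CharOneSemifield F]

instance inst_s4 : SemilatticeSup F :=
  @SemilatticeSup.mk' F ⟨oplus⟩ oplus_comm oplus_assoc oplus_idem

instance : IsOrderedAddMonoid F where
  add_le_add_left X Y (h : oplus X Y = Y) Z := by
    change oplus (X + Z) (Y + Z) = Y + Z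
    rw [add_comm X, add_comm Y, ← add_oplus, h]

theorem sup_add (X Y Z : F) : X ⊔ Y + Z = (X + Z) ⊔ (Y + Z) := by
  rw [add_comm, add_comm X, add_comm Y]
  exact add_oplus Z X Y

theorem succ_nsmul_sup_zero (x : F) (n : ℕ) : (n + 1) • (x ⊔ 0) = (x + n • (x ⊔ 0)) ⊔ 0 := by
  induction n with
  | zero => simp
  | succ n ih =>
    set y := x ⊔ 0
    have hy : n • y ≤ (n + 1) • y := nsmul_le_nsmul_left le_sup_right n.le_succ
    calc (n + 1 + 1) • y = (x ⊔ 0) + (n + 1) • y := succ_nsmul' y (n + 1)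
      _ = (x + (n + 1) • y) ⊔ ((x + n • y) ⊔ 0) := by
        rw [sup_add, zero_add]
        nth_rw 2 [ih]
      _ = (x + (n + 1) • y) ⊔ 0 := by
        rw [← sup_assoc, sup_eq_left.2 (add_le_add_right hy x)]

theorem nonneg_of_nsmul_nonneg {n : ℕ} (hn : n ≠ 0) {x : F} (h : 0 ≤ n • x) : 0 ≤ x := by
  obtain ⟨m, rfl⟩ := Nat.exists_eq_succ_of_ne_zero hn
  set y := x ⊔ 0
  have hle : (m + 1) • x ≤ x + m • y := by
    rw [succ_nsmul']
    exact add_le_add_right (nsmul_le_nsmul_right le_sup_left m) x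
  -- `(m + 1) • y = (x + m • y) ⊔ 0` collapses to `x + m • y`, so cancelling `m • y` gives `y = x`.
  have hyx : y + m • y = x + m • y := by
    rw [← succ_nsmul', succ_nsmul_sup_zero, sup_eq_left.2 (h.trans hle)]
  rw [add_left_inj] at hyx
  exact hyx ▸ le_sup_right

theorem nsmul_le_nsmul_iff {n : ℕ} (hn : n ≠ 0) {x y : F} : n • x ≤ n • y ↔ x ≤ y := by
  refine ⟨fun h => ?_, fun h => nsmul_le_nsmul_right h n⟩
  rw [← sub_nonneg] at h ⊢
  exact nonneg_of_nsmul_nonneg hn (by rwa [nsmul_sub])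

theorem nonneg_of_assumption1 {E : F} (h1 : Assumption1 E) : 0 ≤ E := by
  obtain ⟨a, b, hb, hlow, -⟩ := h1 E
  have : -(a • E) ≤ b • E := hlow
  rw [neg_le_iff_add_nonneg, ← add_nsmul] at this
  exact nonneg_of_nsmul_nonneg (by omega) this

def IsRatioBound (E : F) (a b : ℕ) (X : F) : Prop := -(a • E) ≤ b • X ∧ b • X ≤ a • E

theorem rval_eq_sInf (E X : F) :
    rval E X = sInf {t : ℝ | ∃ a b : ℕ, 0 < b ∧ t = (a : ℝ) / b ∧ IsRatioBound E a b X} :=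
  rfl

namespace IsRatioBound

variable {E X : F} {a b : ℕ}

theorem mul (h : IsRatioBound E a b X) (k : ℕ) : IsRatioBound E (a * k) (b * k) X := by
  unfold IsRatioBound at *
  rw [mul_nsmul, mul_nsmul, ← smul_neg]
  exact ⟨nsmul_le_nsmul_right h.1 k, nsmul_le_nsmul_right h.2 k⟩

theorem mono (hE : 0 ≤ E) (h : IsRatioBound E a b X) {a' : ℕ} (ha : a ≤ a') :
    IsRatioBound E a' b X :=
  have hle : a • E ≤ a' • E := nsmul_le_nsmul_left hE ha
  ⟨(neg_le_neg hle).trans h.1, h.2.trans hle⟩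

theorem sup_sub_sup (hb : 0 < b) {P P' Q Q' : F} (hP : IsRatioBound E a b (P - P'))
    (hQ : IsRatioBound E a b (Q - Q')) : IsRatioBound E a b (P ⊔ Q - (P' ⊔ Q')) := by
  obtain ⟨c, hc⟩ := perfect b hb (a • E)
  have hbox : ∀ Z, IsRatioBound E a b Z ↔ -c ≤ Z ∧ Z ≤ c := fun Z => by
    rw [IsRatioBound, ← hc, ← smul_neg, nsmul_le_nsmul_iff hb.ne', nsmul_le_nsmul_iff hb.ne']
  rw [hbox] at hP hQ ⊢
  refine ⟨?_, sup_sub_sup_le hP.2 hQ.2⟩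
  rw [neg_le, neg_sub]
  exact sup_sub_sup_le (neg_sub P P' ▸ neg_le.1 hP.1) (neg_sub Q Q' ▸ neg_le.1 hQ.1)

end IsRatioBound

theorem rval_sup_sub_sup_le {E : F} (h1 : Assumption1 E) (P P' Q Q' : F) :
    rval E (P ⊔ Q - (P' ⊔ Q')) ≤ max (rval E (P - P')) (rval E (Q - Q')) := by
  have hne : ∀ X : F,
      {t : ℝ | ∃ a b : ℕ, 0 < b ∧ t = (a : ℝ) / b ∧ IsRatioBound E a b X}.Nonempty := fun X =>
    let ⟨a, b, hb, h⟩ := h1 X; ⟨_, a, b, hb, rfl, h⟩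
  simp only [rval_eq_sInf]
  refine csInf_le_max_csInf (hne _) (hne _) ⟨0, ?_⟩ ?_
  · rintro t ⟨a, b, -, rfl, -⟩
    positivity
  rintro _ ⟨a₁, b₁, hb₁, rfl, hP⟩ _ ⟨a₂, b₂, hb₂, rfl, hQ⟩
  have hE := nonneg_of_assumption1 h1
  refine ⟨_, _, Nat.mul_pos hb₁ hb₂, (natCast_max_mul_div_mul hb₁ hb₂).symm, ?_⟩
  refine IsRatioBound.sup_sub_sup (Nat.mul_pos hb₁ hb₂) ((hP.mul b₂).mono hE (le_max_left _ _)) ?_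
  rw [mul_comm b₁]
  exact (hQ.mul b₁).mono hE (le_max_right _ _)

end CharOneSemifield

/-- the ultrametric-type inequality
`r((X ⊕ Y) - (X' ⊕ Y')) ≤ max (r (X - X')) (r (Y - Y'))`, and in particular
`r(X ⊕ Y) ≤ max (r X) (r Y)`. -/
theorem stmt4 {F : Type*} [CharOneSemifield F] (E : F) (h1 : Assumption1 E)
    (X X' Y Y' : F) :
    rval E (oplus X Y - oplus X' Y') ≤ max (rval E (X - X')) (rval E (Y - Y')) ∧
    rval E (oplus X Y) ≤ max (rval E X) (rval E Y) := by
  refine ⟨rval_sup_sub_sup_le h1 X X' Y Y', ?_⟩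
  have h := rval_sup_sub_sup_le h1 X 0 Y 0
  rwa [sup_idem, sub_zero, sub_zero, sub_zero] at h
end

section
/- Let F be a commutative perfect semi-field of characteristic 1 satisfying Assumption 1, and let φ ∈ S_E(F). Then φ is monotone for the canonical order (X ≤ Y implies φ(X) ≤ φ(Y)), and |φ(X)| ≤ r(X) for every X ∈ F. -/
open scoped Pointwise

open CharOneSemifield

namespace CharOneSemifield

variable {F : Type*} [CharOneSemifield F] {φ : F → ℝ}

theorem le_of_cle (hmax : ∀ X Y : F, φ (oplus X Y) = max (φ X) (φ Y)) {X Y : F}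
    (h : cle X Y) : φ X ≤ φ Y := by
  rw [← h, hmax]
  exact le_max_left _ _

theorem abs_le_div_of_cle {E X : F} (hmax : ∀ X Y : F, φ (oplus X Y) = max (φ X) (φ Y))
    (hadd : ∀ X Y : F, φ (X + Y) = φ X + φ Y) (hE : φ E = 1) {a b : ℕ} (hb : 0 < b)
    (hlow : cle (-(a • E)) (b • X)) (hup : cle (b • X) (a • E)) :
    |φ X| ≤ a / b := by
  let f : F →+ ℝ := AddMonoidHom.mk' φ hadd
  have hfE : f E = 1 := hE
  have hlow' : -(a : ℝ) ≤ b * f X := by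
    have := le_of_cle hmax hlow
    change f _ ≤ f _ at this
    rwa [map_neg, map_nsmul, map_nsmul, hfE, nsmul_eq_mul, nsmul_eq_mul, mul_one] at this
  have hup' : b * f X ≤ a := by
    have := le_of_cle hmax hup
    change f _ ≤ f _ at this
    rwa [map_nsmul, map_nsmul, hfE, nsmul_eq_mul, nsmul_eq_mul, mul_one] at this
  have hbX : |(b : ℝ) * φ X| ≤ a := abs_le.mpr ⟨hlow', hup'⟩
  rw [abs_mul, Nat.abs_cast, mul_comm] at hbX
  rwa [le_div_iff₀ (by exact_mod_cast hb)]

theorem abs_le_rval {E : F} (h1 : Assumption1 E) (hφ : φ ∈ specE E) (X : F) :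
    |φ X| ≤ rval E X := by
  obtain ⟨⟨-, hmax, hadd⟩, hE⟩ := hφ
  -- nonemptiness matters: `sInf ∅ = 0` in `ℝ`
  refine le_csInf ?_ ?_
  · obtain ⟨a, b, hb, hlow, hup⟩ := h1 X
    exact ⟨a / b, a, b, hb, rfl, hlow, hup⟩
  · rintro t ⟨a, b, hb, rfl, hlow, hup⟩
    exact abs_le_div_of_cle hmax hadd hE hb hlow hup

end CharOneSemifield

/-- any normalized character is monotone for the canonical order, and
`|φ(X)| ≤ r(X)` for all `X`. -/
theorem stmt7 {F : Type*} [CharOneSemifield F] (E : F) (h1 : Assumption1 E)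
    (φ : F → ℝ) (hφ : φ ∈ specE E) :
    (∀ X Y : F, cle X Y → φ X ≤ φ Y) ∧ (∀ X : F, |φ X| ≤ rval E X) :=
  ⟨fun _ _ => le_of_cle hφ.1.2.1, abs_le_rval h1 hφ⟩
end

section
/- Let F be a commutative perfect semi-field of characteristic 1 satisfying Assumptions 1 and 2. Then the spectrum S_E(F), viewed as a subset of the product space ℝ^F with the topology of pointwise convergence, is a compact topological space. -/
open scoped Pointwise

open CharOneSemifield

/-! Every character `φ ∈ S_E(F)` is monotone and additive with `φ E = 1`, so a pair `(a, b)` with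
`-(a • E) ≤ b • X ≤ a • E` (Assumption 1) confines `φ X` to `[-a/b, a/b]`. Hence `S_E(F)` lies in a
product of compact intervals, and it is closed there since its defining identities are pointwise
equations between continuous functions of `φ`. -/

namespace CharOneSemifield

variable {F : Type*} [CharOneSemifield F]

lemma apply_le_of_cle {φ : F → ℝ} (hmax : ∀ X Y : F, φ (oplus X Y) = max (φ X) (φ Y))
    {X Y : F} (h : cle X Y) : φ X ≤ φ Y := by
  rw [← h, hmax]
  exact le_max_left _ _

lemma specE_eq_setOf (E : F) :
    specE E = {φ : F → ℝ | (∀ X Y : F, φ (oplus X Y) = max (φ X) (φ Y)) ∧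
      (∀ X Y : F, φ (X + Y) = φ X + φ Y) ∧ φ E = 1} := by
  ext φ
  constructor
  · rintro ⟨⟨_, hmax, hadd⟩, hE⟩
    exact ⟨hmax, hadd, hE⟩
  · rintro ⟨hmax, hadd, hE⟩
    exact ⟨⟨⟨E, by simp [hE]⟩, hmax, hadd⟩, hE⟩

lemma isClosed_specE (E : F) : IsClosed (specE E) := by
  rw [specE_eq_setOf, Set.ofPred_and, Set.ofPred_and]
  simp only [Set.ofPred_forall]
  refine .inter ?_ (.inter ?_ ?_)
  · exact isClosed_iInter fun X => isClosed_iInter fun Y =>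
      isClosed_eq (continuous_apply _) ((continuous_apply X).max (continuous_apply Y))
  · exact isClosed_iInter fun X => isClosed_iInter fun Y =>
      isClosed_eq (continuous_apply _) ((continuous_apply X).add (continuous_apply Y))
  · exact isClosed_eq (continuous_apply _) continuous_const

lemma mem_Icc_of_mem_specE {E X : F} {φ : F → ℝ} (hφ : φ ∈ specE E) {a b : ℕ} (hb : 0 < b)
    (hlo : cle (-(a • E)) (b • X)) (hhi : cle (b • X) (a • E)) :
    φ X ∈ Set.Icc (-((a : ℝ) / b)) ((a : ℝ) / b) := by
  obtain ⟨⟨_, hmax, hadd⟩, hE⟩ := hφ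
  let ψ : F →+ ℝ := AddMonoidHom.mk' φ hadd
  have hsmul (n : ℕ) (Y : F) : φ (n • Y) = n * φ Y := (map_nsmul ψ n Y).trans (nsmul_eq_mul _ _)
  have hneg (Y : F) : φ (-Y) = -φ Y := map_neg ψ Y
  have hup := apply_le_of_cle hmax hhi
  have hdown := apply_le_of_cle hmax hlo
  simp only [hneg, hsmul, hE, mul_one] at hup hdown
  have hb' : (0 : ℝ) < b := by exact_mod_cast hb
  constructor
  · rw [← neg_div, div_le_iff₀ hb']
    linarith
  · rw [le_div_iff₀ hb']
    linarith

end CharOneSemifield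

theorem stmt8_general {F : Type*} [CharOneSemifield F] (E : F)
    (h1 : Assumption1 E) :
    IsCompact (specE E) := by
  choose a b hb hlo hhi using h1
  have hK : IsCompact (Set.univ.pi fun X => Set.Icc (-((a X : ℝ) / b X)) ((a X : ℝ) / b X)) :=
    isCompact_univ_pi fun _ => isCompact_Icc
  refine hK.of_isClosed_subset (isClosed_specE E) fun φ hφ X _ => ?_
  exact mem_Icc_of_mem_specE hφ (hb X) (hlo X) (hhi X)

/-- the spectrum `S_E(F)`, as a subset of the product space `F → ℝ` with
the topology of pointwise convergence, is compact. -/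
theorem stmt8 {F : Type*} [CharOneSemifield F] (E : F)
    (h1 : Assumption1 E) (h2 : Assumption2 E) :
    IsCompact (specE E) :=
  stmt8_general E h1
end

section
/- Let ∼ be an equivalence relation on ℝ such that for all x, y, z ∈ ℝ, x ∼ y implies −x ∼ −y, x + z ∼ y + z, and max(x, z) ∼ max(y, z). Then either x ∼ y for all x, y ∈ ℝ, or ∼ is the equality relation. -/
/-!
If `r a b` with `a ≠ b`, translating gives `r 0 d` for some `d > 0`, hence `r 0 (n • d)` for all `n`.
For `0 ≤ x ≤ n • d`, taking `max` with `x` turns `r 0 (n • d)` into `r x (n • d)`, so `r 0 x` by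
the Archimedean property; negation then covers `x < 0`.
-/

theorem rel_zero_nsmul {M : Type*} [AddMonoid M] {r : M → M → Prop} (hr : Equivalence r)
    (hadd : ∀ x y z : M, r x y → r (x + z) (y + z)) {d : M} (hd : r 0 d) (n : ℕ) :
    r 0 (n • d) := by
  induction n with
  | zero => simpa using hr.refl 0
  | succ n ih =>
    have step : r (n • d) ((n + 1) • d) := by
      simpa [succ_nsmul'] using hadd 0 d (n • d) hd
    exact hr.trans ih step

theorem rel_zero_of_nonneg {M : Type*} [AddCommMonoid M] [LinearOrder M] [Archimedean M]
    {r : M → M → Prop} (hr : Equivalence r) (hadd : ∀ x y z : M, r x y → r (x + z) (y + z))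
    (hmax : ∀ x y z : M, r x y → r (max x z) (max y z)) {d : M} (hd : 0 < d) (hrd : r 0 d)
    {x : M} (hx : 0 ≤ x) : r 0 x := by
  obtain ⟨n, hn⟩ := Archimedean.arch x hd
  have hrn := rel_zero_nsmul hr hadd hrd n
  have hxn : r x (n • d) := by
    simpa [max_eq_right hx, max_eq_left hn] using hmax 0 (n • d) x hrn
  exact hr.trans hrn (hr.symm hxn)

section OrderedGroup

variable {G : Type*} [AddCommGroup G] [LinearOrder G] [IsOrderedAddMonoid G] {r : G → G → Prop}

theorem exists_pos_rel_zero_of_rel_of_ne (hr : Equivalence r)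
    (hadd : ∀ x y z : G, r x y → r (x + z) (y + z)) {a b : G} (hab : r a b) (hne : a ≠ b) :
    ∃ d, 0 < d ∧ r 0 d := by
  have translate : ∀ {a b : G}, r a b → a < b → ∃ d, 0 < d ∧ r 0 d := fun {a b} hab hlt =>
    ⟨b - a, sub_pos.mpr hlt, by simpa [← sub_eq_add_neg] using hadd a b (-a) hab⟩
  rcases hne.lt_or_gt with hlt | hgt
  · exact translate hab hlt
  · exact translate (hr.symm hab) hgt

theorem rel_zero_of_pos_rel_zero [Archimedean G] (hr : Equivalence r)
    (hneg : ∀ x y : G, r x y → r (-x) (-y)) (hadd : ∀ x y z : G, r x y → r (x + z) (y + z))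
    (hmax : ∀ x y z : G, r x y → r (max x z) (max y z)) {d : G} (hd : 0 < d) (hrd : r 0 d)
    (x : G) : r 0 x := by
  rcases le_or_gt 0 x with hx | hx
  · exact rel_zero_of_nonneg hr hadd hmax hd hrd hx
  · simpa using hneg 0 (-x) (rel_zero_of_nonneg hr hadd hmax hd hrd (neg_nonneg.mpr hx.le))

end OrderedGroup

/-- a congruence on the semi-field `(ℝ, max, +)` of characteristic 1,
i.e. an equivalence relation compatible with negation, translation and `max`,
is either trivial (relating all reals) or the equality relation. -/
theorem stmt9 (r : ℝ → ℝ → Prop) (hequiv : Equivalence r)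
    (hneg : ∀ x y : ℝ, r x y → r (-x) (-y))
    (hadd : ∀ x y z : ℝ, r x y → r (x + z) (y + z))
    (hmax : ∀ x y z : ℝ, r x y → r (max x z) (max y z)) :
    (∀ x y : ℝ, r x y) ∨ (∀ x y : ℝ, r x y ↔ x = y) := by
  by_cases hdiag : ∀ x y, r x y → x = y
  · exact Or.inr fun x y => ⟨hdiag x y, fun hxy => hxy ▸ hequiv.refl x⟩
  push Not at hdiag
  obtain ⟨a, b, hab, hne⟩ := hdiag
  obtain ⟨d, hd, hrd⟩ := exists_pos_rel_zero_of_rel_of_ne hequiv hadd hab hne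
  have hzero := rel_zero_of_pos_rel_zero hequiv hneg hadd hmax hd hrd
  exact Or.inl fun x y => hequiv.trans (hequiv.symm (hzero x)) (hzero y)
end

section
/- Let F be a commutative perfect semi-field of characteristic 1, let ∼ be a congruence on F, and let A, B, C ∈ F with A ∼ 0, C ∼ 0 and A ≤ B ≤ C for the canonical order. Then B ∼ 0. -/
open scoped Pointwise

open CharOneSemifield

namespace CharOneSemifield.IsCongruence

variable {F : Type*} [CharOneSemifield F] {r : F → F → Prop}

theorem rel_oplus_of_le (hr : IsCongruence r) {X X' Y : F} (hX : r X X') (hXY : cle X Y) :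
    r Y (oplus X' Y) := by
  have h := hr.oplus_compat Y hX
  rwa [show oplus X Y = Y from hXY] at h

theorem rel_oplus_of_ge (hr : IsCongruence r) {X Y Y' : F} (hY : r Y Y') (hXY : cle X Y) :
    r Y (oplus Y' X) := by
  have h := hr.oplus_compat X hY
  rwa [oplus_comm Y X, show oplus X Y = Y from hXY] at h

end CharOneSemifield.IsCongruence

/-- if `A ∼ 0`, `C ∼ 0` and `A ≤ B ≤ C` then `B ∼ 0`. -/
theorem stmt10 {F : Type*} [CharOneSemifield F] (r : F → F → Prop)
    (hr : IsCongruence r) (A B C : F)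
    (hA : r A 0) (hC : r C 0) (hAB : cle A B) (hBC : cle B C) :
    r B 0 :=
  have hB : r B (oplus 0 B) := hr.rel_oplus_of_le hA hAB
  have hC' : r C (oplus 0 B) := hr.rel_oplus_of_ge hC hBC
  hr.equiv.trans (hr.equiv.trans hB (hr.equiv.symm hC')) hC
end

section
/- Let F be a commutative perfect semi-field of characteristic 1 and ∼ a congruence on F. Then for all X, Y ∈ F, the relation (X ⊕ Y) ∼ Y holds (i.e. the class of X is ≤ the class of Y in the quotient semi-field F/∼) if and only if there exists H ∈ F with H ∼ 0 and X ≤ Y + H. -/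
open scoped Pointwise

open CharOneSemifield

namespace CharOneSemifield

variable {F : Type*} [CharOneSemifield F]

theorem cle_oplus_left (X Y : F) : cle X (oplus X Y) := by
  rw [cle, ← oplus_assoc, oplus_idem]

namespace IsCongruence

variable {r : F → F → Prop}

theorem oplus_compat_left (hr : IsCongruence r) {X Y : F} (Z : F) (h : r X Y) :
    r (oplus Z X) (oplus Z Y) := by
  rw [oplus_comm Z X, oplus_comm Z Y]
  exact hr.oplus_compat Z h

theorem sub_rel_zero_iff (hr : IsCongruence r) (A B : F) : r (A - B) 0 ↔ r A B := by
  constructor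
  · intro h
    simpa using hr.add_compat B h
  · intro h
    simpa [sub_eq_add_neg] using hr.add_compat (-B) h

end IsCongruence

end CharOneSemifield

/-- `(X ⊕ Y) ∼ Y` (the class of `X` is `≤` the class of `Y` in `F/∼`)
iff there exists `H ∼ 0` with `X ≤ Y + H`. -/
theorem stmt11 {F : Type*} [CharOneSemifield F] (r : F → F → Prop)
    (hr : IsCongruence r) (X Y : F) :
    r (oplus X Y) Y ↔ ∃ H : F, r H 0 ∧ cle X (Y + H) := by
  constructor
  · intro h
    refine ⟨oplus X Y - Y, (hr.sub_rel_zero_iff _ _).mpr h, ?_⟩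
    rw [add_sub_cancel]
    exact cle_oplus_left X Y
  · rintro ⟨H, hH, hle⟩
    have hYH : r (Y + H) Y := (hr.sub_rel_zero_iff _ _).mp (by rwa [add_sub_cancel_left])
    have hXYH : r (oplus X (Y + H)) (oplus X Y) := hr.oplus_compat_left X hYH
    rw [show oplus X (Y + H) = Y + H from hle] at hXYH
    exact hr.equiv.trans (hr.equiv.symm hXYH) hYH
end

section
/- Let V be a finite-dimensional real vector space (or ℝ^n) and let 𝒞 be the set of all compact convex subsets of V that contain 0. Let φ : 𝒞 → ℝ be a map such that for all A, B ∈ 𝒞: φ(A + B) = φ(A) + φ(B), where A + B is the Minkowski sum, and φ(conv(A ∪ B)) = max(φ(A), φ(B)), where conv(A ∪ B) is the convex hull of A ∪ B. Then there exists a linear form ψ on V such that φ(A) = max over v ∈ A of ψ(v) for every A ∈ 𝒞; i.e., φ(A) is the value of the support function of A at ψ. -/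
/-!
Write `g v = φ [0, v]`. Since `[0, u] + [0, v] = conv ([0, u] ∪ [0, v] ∪ [0, u + v])`, the
two axioms give `g u + g v = max (g u) (g v) (g (u + v))`, and this identity alone forces
`g = max ψ 0` for the additive map `ψ v = g v - g (-v)`. Monotonicity of `φ` bounds `ψ` on the
unit ball by `φ B`, so `ψ` is continuous, hence linear. Then `φ` and the support function at
`ψ` agree on segments, hence on polytopes `conv ({0} ∪ t)`; a compact convex `A ∋ 0` lies
between such a polytope `D ⊆ A` and `D + B / n`, and `φ (B / n) = φ B / n → 0`.
-/

open scoped Pointwise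

open Set Metric Filter Topology

theorem exists_addMonoidHom_of_add_eq_max {G : Type*} [AddCommGroup G] {g : G → ℝ}
    (hg : ∀ u v, g u + g v = max (max (g u) (g v)) (g (u + v))) :
    ∃ ψ : G →+ ℝ, ∀ v, g v = max (ψ v) 0 := by
  have hg' : ∀ u v w, u + v = w → g u + g v = max (max (g u) (g v)) (g w) := by
    rintro u v _ rfl; exact hg u v
  have hg0 : g 0 = 0 := by have := hg' 0 0 0 (add_zero 0); grind
  let ψ : G → ℝ := fun v => g v - g (-v)
  have hgψ : ∀ v, g v = max (ψ v) 0 := fun v => by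
    have := hg' v (-v) 0 (add_neg_cancel v)
    grind
  have hψ_neg : ∀ v, ψ (-v) = -ψ v := fun v => by simp only [ψ, neg_neg]; ring
  clear_value ψ
  have hψ_add : ∀ u v, ψ (u + v) = ψ u + ψ v := fun u v => by
    have h₁ := hg' u v (u + v) rfl
    have h₂ := hg' (-u) (-v) (-(u + v)) (by abel)
    have h₃ := hg' (u + v) (-v) u (by abel)
    have h₄ := hg' (-(u + v)) v (-u) (by abel)
    have h₅ := hg' (u + v) (-u) v (by abel)
    have h₆ := hg' (-(u + v)) u (-v) (by abel)
    simp only [hgψ, hψ_neg] at h₁ h₂ h₃ h₄ h₅ h₆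
    -- the identity at the three pairs from `u, v, -(u + v)` and from their negatives
    -- pins down `ψ (u + v)` in each sign case
    grind
  exact ⟨AddMonoidHom.mk' ψ hψ_add, hgψ⟩

theorem exists_finite_subset_subset_add_closedBall {E : Type*} [SeminormedAddCommGroup E]
    {A : Set E} (hA : IsCompact A) {r : ℝ} (hr : 0 < r) :
    ∃ t ⊆ A, t.Finite ∧ A ⊆ t + closedBall 0 r := by
  obtain ⟨t, htA, ht, hcover⟩ := hA.finite_cover_balls hr
  refine ⟨t, htA, ht, fun a ha => ?_⟩
  obtain ⟨x, hx, hax⟩ := mem_iUnion₂.1 (hcover ha)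
  refine ⟨x, hx, a - x, ?_, add_sub_cancel x a⟩
  rw [mem_closedBall_zero_iff, ← dist_eq_norm]
  exact (mem_ball.1 hax).le

theorem convexHull_union_segment_eq_segment_add_segment {E : Type*} [AddCommGroup E]
    [Module ℝ E] (u v : E) :
    convexHull ℝ (convexHull ℝ (segment ℝ 0 u ∪ segment ℝ 0 v) ∪ segment ℝ 0 (u + v)) =
      segment ℝ 0 u + segment ℝ 0 v := by
  simp only [← convexHull_pair, convexHull_convexHull_union_left,
    convexHull_convexHull_union_right, ← convexHull_add]
  congr 1
  ext x
  simp only [mem_union, mem_insert_iff, mem_singleton_iff, Set.mem_add]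
  aesop

theorem convexHull_segment_union_segment {E : Type*} [AddCommGroup E] [Module ℝ E] (u v : E) :
    convexHull ℝ (segment ℝ 0 u ∪ segment ℝ 0 v) = convexHull ℝ {0, u, v} := by
  simp only [← convexHull_pair, convexHull_convexHull_union_left,
    convexHull_convexHull_union_right]
  congr 1
  ext x
  simp only [mem_union, mem_insert_iff, mem_singleton_iff]
  tauto

section

variable {V : Type*} [NormedAddCommGroup V] [NormedSpace ℝ V]

variable (V) in
def compactConvexZero : Set (Set V) := {A | IsCompact A ∧ Convex ℝ A ∧ (0 : V) ∈ A}

namespace compactConvexZero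

theorem zero_mem : (0 : Set V) ∈ compactConvexZero V :=
  ⟨isCompact_singleton, convex_singleton 0, mem_singleton 0⟩

theorem add_mem {A B : Set V} (hA : A ∈ compactConvexZero V) (hB : B ∈ compactConvexZero V) :
    A + B ∈ compactConvexZero V :=
  ⟨hA.1.add hB.1, hA.2.1.add hB.2.1, by simpa using add_mem_add hA.2.2 hB.2.2⟩

theorem smul_mem {A : Set V} (hA : A ∈ compactConvexZero V) (r : ℝ) :
    r • A ∈ compactConvexZero V :=
  ⟨hA.1.smul r, hA.2.1.smul r, by simpa using smul_mem_smul_set (a := r) hA.2.2⟩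

theorem convexHull_insert_zero_mem {s : Set V} (hs : s.Finite) :
    convexHull ℝ (insert 0 s) ∈ compactConvexZero V :=
  ⟨(hs.insert 0).isCompact_convexHull ℝ, convex_convexHull ℝ _,
    subset_convexHull ℝ _ (mem_insert 0 s)⟩

theorem segment_mem (v : V) : segment ℝ 0 v ∈ compactConvexZero V := by
  simpa [convexHull_pair] using convexHull_insert_zero_mem (finite_singleton v)

theorem closedBall_mem [FiniteDimensional ℝ V] {r : ℝ} (hr : 0 ≤ r) :
    closedBall (0 : V) r ∈ compactConvexZero V :=
  ⟨isCompact_closedBall 0 r, convex_closedBall 0 r, mem_closedBall_self hr⟩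

end compactConvexZero

structure IsConvexCharacter (φ : Set V → ℝ) : Prop where
  map_add : ∀ A ∈ compactConvexZero V, ∀ B ∈ compactConvexZero V, φ (A + B) = φ A + φ B
  map_convexHull_union : ∀ A ∈ compactConvexZero V, ∀ B ∈ compactConvexZero V,
    φ (convexHull ℝ (A ∪ B)) = max (φ A) (φ B)

namespace IsConvexCharacter

variable {φ : Set V → ℝ}

theorem map_zero (hφ : IsConvexCharacter φ) : φ 0 = 0 := by
  have h := hφ.map_add 0 compactConvexZero.zero_mem 0 compactConvexZero.zero_mem
  rw [add_zero] at h
  linarith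

theorem mono (hφ : IsConvexCharacter φ) {A B : Set V} (hA : A ∈ compactConvexZero V)
    (hB : B ∈ compactConvexZero V) (hAB : A ⊆ B) : φ A ≤ φ B := by
  have h := hφ.map_convexHull_union A hA B hB
  rw [union_eq_self_of_subset_left hAB, hB.2.1.convexHull_eq] at h
  exact h ▸ le_max_left _ _

theorem map_natCast_smul (hφ : IsConvexCharacter φ) {K : Set V} (hK : K ∈ compactConvexZero V)
    (n : ℕ) : φ ((n : ℝ) • K) = n * φ K := by
  induction n with
  | zero => rw [Nat.cast_zero, zero_smul_set ⟨0, hK.2.2⟩, hφ.map_zero, zero_mul]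
  | succ n ih =>
    rw [Nat.cast_succ, hK.2.1.add_smul n.cast_nonneg zero_le_one, one_smul,
      hφ.map_add _ (compactConvexZero.smul_mem hK n) _ hK, ih, add_one_mul]

theorem map_segment_add_map_segment (hφ : IsConvexCharacter φ) (u v : V) :
    φ (segment ℝ 0 u) + φ (segment ℝ 0 v) =
      max (max (φ (segment ℝ 0 u)) (φ (segment ℝ 0 v))) (φ (segment ℝ 0 (u + v))) := by
  have hhull : convexHull ℝ (segment ℝ 0 u ∪ segment ℝ 0 v) ∈ compactConvexZero V := by
    rw [convexHull_segment_union_segment]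
    exact compactConvexZero.convexHull_insert_zero_mem (toFinite _)
  have hu := compactConvexZero.segment_mem u
  have hv := compactConvexZero.segment_mem v
  rw [← hφ.map_add _ hu _ hv, ← convexHull_union_segment_eq_segment_add_segment,
    hφ.map_convexHull_union _ hhull _ (compactConvexZero.segment_mem _),
    hφ.map_convexHull_union _ hu _ hv]

theorem exists_continuousLinearMap [FiniteDimensional ℝ V] (hφ : IsConvexCharacter φ) :
    ∃ ψ : V →L[ℝ] ℝ, ∀ v, φ (segment ℝ 0 v) = max (ψ v) 0 := by
  obtain ⟨ψ, hψ⟩ := exists_addMonoidHom_of_add_eq_max hφ.map_segment_add_map_segment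
  have hball : ∀ v ∈ closedBall (0 : V) 1, ψ v ≤ φ (closedBall 0 1) := fun v hv =>
    calc ψ v ≤ φ (segment ℝ 0 v) := hψ v ▸ le_max_left _ _
      _ ≤ φ (closedBall 0 1) := hφ.mono (compactConvexZero.segment_mem v)
          (compactConvexZero.closedBall_mem zero_le_one)
          ((convex_closedBall 0 1).segment_subset (mem_closedBall_self zero_le_one) hv)
  have hbdd : Bornology.IsBounded (ψ '' closedBall 0 1) := by
    refine isBounded_iff_bddBelow_bddAbove.2
      ⟨⟨-φ (closedBall 0 1), ?_⟩, ⟨φ (closedBall 0 1), ?_⟩⟩ <;> rintro _ ⟨v, hv, rfl⟩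
    · have := hball (-v) (by simpa using hv)
      rw [map_neg] at this
      linarith
    · exact hball v hv
  exact ⟨ψ.toRealLinearMap (ψ.continuous_of_isBounded_nhds_zero (closedBall_mem_nhds 0 one_pos)
    hbdd), hψ⟩

theorem map_closedBall_one_div [FiniteDimensional ℝ V] (hφ : IsConvexCharacter φ) (n : ℕ) :
    φ (closedBall 0 (1 / (n + 1))) = φ (closedBall 0 1) * (1 / (n + 1)) := by
  have hr : (0 : ℝ) ≤ 1 / (n + 1) := by positivity
  have h := hφ.map_natCast_smul (compactConvexZero.closedBall_mem hr) (n + 1)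
  rw [smul_closedBall _ _ hr, smul_zero, Real.norm_natCast, Nat.cast_succ,
    mul_one_div_cancel n.cast_add_one_ne_zero] at h
  rw [h]
  field_simp

theorem map_convexHull_insert_zero_le (hφ : IsConvexCharacter φ) {s : Set V} (hs : s.Finite)
    {M : ℝ} (hM : 0 ≤ M) (h : ∀ a ∈ s, φ (segment ℝ 0 a) ≤ M) :
    φ (convexHull ℝ (insert 0 s)) ≤ M := by
  induction s, hs using Set.Finite.induction_on with
  | empty =>
    rw [insert_empty_eq, convexHull_singleton]
    exact hφ.map_zero ▸ hM
  | @insert a s _ hs ih =>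
    have hhull : convexHull ℝ (insert 0 (insert a s)) =
        convexHull ℝ (segment ℝ 0 a ∪ convexHull ℝ (insert 0 s)) := by
      rw [← convexHull_pair, convexHull_convexHull_union_left, convexHull_convexHull_union_right]
      congr 1
      ext x
      simp only [mem_insert_iff, mem_union, mem_singleton_iff]
      tauto
    rw [hhull, hφ.map_convexHull_union _ (compactConvexZero.segment_mem a) _
      (compactConvexZero.convexHull_insert_zero_mem hs)]
    exact max_le (h a (mem_insert a s)) (ih fun b hb => h b (mem_insert_of_mem a hb))

theorem le_sSup_image_add [FiniteDimensional ℝ V] (hφ : IsConvexCharacter φ) {ψ : V →L[ℝ] ℝ}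
    (hψ : ∀ v, φ (segment ℝ 0 v) = max (ψ v) 0) {A : Set V} (hA : A ∈ compactConvexZero V)
    (n : ℕ) : φ A ≤ sSup (ψ '' A) + φ (closedBall 0 1) * (1 / (n + 1)) := by
  have hbdd : BddAbove (ψ '' A) := (hA.1.image ψ.continuous).bddAbove
  have hsup_nonneg : 0 ≤ sSup (ψ '' A) := by
    simpa using le_csSup hbdd (mem_image_of_mem ψ hA.2.2)
  have hr : (0 : ℝ) < 1 / (n + 1) := by positivity
  obtain ⟨t, htA, ht, hAt⟩ := exists_finite_subset_subset_add_closedBall hA.1 hr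
  have hD := compactConvexZero.convexHull_insert_zero_mem ht
  have hB := compactConvexZero.closedBall_mem (V := V) hr.le
  calc φ A ≤ φ (convexHull ℝ (insert 0 t) + closedBall 0 (1 / (n + 1))) :=
        hφ.mono hA (compactConvexZero.add_mem hD hB) (hAt.trans
          (add_subset_add_right ((subset_insert 0 t).trans (subset_convexHull ℝ _))))
    _ = φ (convexHull ℝ (insert 0 t)) + φ (closedBall 0 (1 / (n + 1))) := hφ.map_add _ hD _ hB
    _ ≤ sSup (ψ '' A) + φ (closedBall 0 1) * (1 / (n + 1)) := by
      rw [hφ.map_closedBall_one_div]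
      gcongr
      refine hφ.map_convexHull_insert_zero_le ht hsup_nonneg fun v hv => ?_
      rw [hψ]
      exact max_le (le_csSup hbdd (mem_image_of_mem ψ (htA hv))) hsup_nonneg

theorem eq_sSup_image [FiniteDimensional ℝ V] (hφ : IsConvexCharacter φ) {ψ : V →L[ℝ] ℝ}
    (hψ : ∀ v, φ (segment ℝ 0 v) = max (ψ v) 0) {A : Set V} (hA : A ∈ compactConvexZero V) :
    φ A = sSup (ψ '' A) := by
  refine le_antisymm ?_ (csSup_le ⟨ψ 0, mem_image_of_mem ψ hA.2.2⟩ ?_)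
  · have hlim : Tendsto
        (fun n : ℕ => sSup (ψ '' A) + φ (closedBall 0 1) * (1 / ((n : ℝ) + 1)))
        atTop (𝓝 (sSup (ψ '' A))) := by
      simpa using ((tendsto_one_div_add_atTop_nhds_zero_nat (𝕜 := ℝ)).const_mul
        (φ (closedBall 0 1))).const_add (sSup (ψ '' A))
    exact ge_of_tendsto' hlim (hφ.le_sSup_image_add hψ hA)
  · rintro _ ⟨v, hv, rfl⟩
    calc ψ v ≤ φ (segment ℝ 0 v) := hψ v ▸ le_max_left _ _
      _ ≤ φ A := hφ.mono (compactConvexZero.segment_mem v) hA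
          (hA.2.1.segment_subset hA.2.2 hv)

end IsConvexCharacter

end

/-- the characters of the semi-ring of compact convex subsets of a
finite-dimensional real vector space containing `0`, with `⊕ = conv(· ∪ ·)` and
`+ =` Minkowski sum, are given by support functions: there is a linear form `ψ`
with `φ A = max_{v ∈ A} ψ v` (i.e. `φ A = sSup (ψ '' A)`) for all such `A`. -/
theorem stmt17 {V : Type*} [NormedAddCommGroup V] [NormedSpace ℝ V]
    [FiniteDimensional ℝ V]
    (C : Set (Set V)) (hC : C = {A : Set V | IsCompact A ∧ Convex ℝ A ∧ (0 : V) ∈ A})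
    (φ : Set V → ℝ)
    (hadd : ∀ A ∈ C, ∀ B ∈ C, φ (A + B) = φ A + φ B)
    (hconv : ∀ A ∈ C, ∀ B ∈ C, φ (convexHull ℝ (A ∪ B)) = max (φ A) (φ B)) :
    ∃ ψ : V →ₗ[ℝ] ℝ, ∀ A ∈ C, φ A = sSup (ψ '' A) := by
  subst hC
  have hφ : IsConvexCharacter φ := ⟨hadd, hconv⟩
  obtain ⟨ψ, hψ⟩ := hφ.exists_continuousLinearMap
  exact ⟨ψ, fun A hA => hφ.eq_sSup_image hψ hA⟩
end
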